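/- arXiv:0804.1974 — 5 statements merged into one kernel-verified Lean document; each statement's English description precedes it below -/
import Mathlib

section
/- If Π = (P_1, P_2, P_3) is a homogeneous 3-scheme on a finite set V, then (P_1, P_2) is an association scheme; that is, (P_1, P_2) satisfies the composition property: for all colors P_i, P_j, P_k ∈ P_2, the number #{γ ∈ V : (α,γ) ∈ P_i and (γ,β) ∈ P_j} is the same for every pair (α,β) ∈ P_k (indeed, when this set is partitioned by the colors P ∈ P_3 containing triples (α,γ,β), each part has size |P|/|P_k|). -/
def Tup (V : Type*) (s : ℕ) : Type _ :=
  {f : Fin s → V // Function.Injective f}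

def proj {V : Type*} {s : ℕ} (i : Fin (s + 1)) (v : Tup V (s + 1)) : Tup V s :=
  ⟨v.1 ∘ i.succAbove, v.2.comp Fin.succAbove_right_injective⟩

def permTup {V : Type*} {s : ℕ} (σ : Equiv.Perm (Fin s)) (v : Tup V s) : Tup V s :=
  ⟨v.1 ∘ σ, v.2.comp σ.injective⟩

abbrev Colors (V : Type*) : Type _ := (s : ℕ) → Set (Set (Tup V s))

def IsMCollection {V : Type*} (m : ℕ) (P : Colors V) : Prop :=
  ∀ s, 1 ≤ s → s ≤ m → Setoid.IsPartition (P s)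

def CompatibleAt {V : Type*} (P : Colors V) (s : ℕ) : Prop :=
  ∀ C ∈ P (s + 1), ∀ u ∈ C, ∀ v ∈ C, ∀ i : Fin (s + 1),
    ∃ Q ∈ P s, proj i u ∈ Q ∧ proj i v ∈ Q

def RegularAt {V : Type*} (P : Colors V) (s : ℕ) : Prop :=
  ∀ C ∈ P (s + 1), ∀ i : Fin (s + 1), ∀ Q ∈ P s, ∀ u ∈ Q, ∀ v ∈ Q,
    {w ∈ C | proj i w = u}.ncard = {w ∈ C | proj i w = v}.ncard

def InvariantAt {V : Type*} (P : Colors V) (s : ℕ) : Prop :=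
  ∀ C ∈ P s, ∀ σ : Equiv.Perm (Fin s), permTup σ '' C ∈ P s

def AntisymmetricAt {V : Type*} (P : Colors V) (s : ℕ) : Prop :=
  ∀ C ∈ P s, ∀ σ : Equiv.Perm (Fin s), σ ≠ 1 → permTup σ '' C ≠ C

def Homogeneous {V : Type*} (P : Colors V) : Prop :=
  ∃ C, P 1 = {C}

def IsMScheme {V : Type*} (m : ℕ) (P : Colors V) : Prop :=
  IsMCollection m P ∧
    ∀ s, 1 ≤ s → s + 1 ≤ m →
      CompatibleAt P s ∧ RegularAt P s ∧ InvariantAt P (s + 1)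

def AntisymmetricColl {V : Type*} (m : ℕ) (P : Colors V) : Prop :=
  ∀ s, 2 ≤ s → s ≤ m → AntisymmetricAt P s

def IsMatching {V : Type*} (P : Colors V) (s : ℕ) (C : Set (Tup V (s + 1))) : Prop :=
  C ∈ P (s + 1) ∧ ∃ i j : Fin (s + 1), i < j ∧ proj i '' C = proj j '' C ∧
    (proj i '' C).ncard = C.ncard

def HasMatching {V : Type*} (m : ℕ) (P : Colors V) : Prop :=
  ∃ s, 1 ≤ s ∧ s + 1 ≤ m ∧ ∃ C, IsMatching P s C

noncomputable def compCount {V : Type*} (Pi Pj : Set (Tup V 2)) (α β : V) : ℕ :=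
  {γ : V | (∃ w ∈ Pi, w.1 0 = α ∧ w.1 1 = γ) ∧ (∃ w ∈ Pj, w.1 0 = γ ∧ w.1 1 = β)}.ncard

section Aux

variable {V : Type*}

lemma unique_color {s : ℕ} {P : Colors V} (hs : Setoid.IsPartition (P s))
    {Q Q' : Set (Tup V s)} (hQ : Q ∈ P s) (hQ' : Q' ∈ P s) {x : Tup V s}
    (hx : x ∈ Q) (hx' : x ∈ Q') : Q = Q' :=
  (hs.2 x).unique ⟨hQ, hx⟩ ⟨hQ', hx'⟩

lemma tup2_ext {u v : Tup V 2} (h0 : u.1 0 = v.1 0) (h1 : u.1 1 = v.1 1) : u = v := by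
  apply Subtype.ext; funext j
  fin_cases j
  · exact h0
  · exact h1

lemma tup3_ext {u v : Tup V 3} (h0 : u.1 0 = v.1 0) (h1 : u.1 1 = v.1 1)
    (h2 : u.1 2 = v.1 2) : u = v := by
  apply Subtype.ext; funext j
  fin_cases j
  · exact h0
  · exact h1
  · exact h2

lemma proj_apply {s : ℕ} (i : Fin (s + 1)) (v : Tup V (s + 1)) (j : Fin s) :
    (proj i v).1 j = v.1 (i.succAbove j) := rfl

lemma proj1_0 (v : Tup V 3) : (proj 1 v).1 0 = v.1 0 := by
  rw [proj_apply, (by decide : (1 : Fin 3).succAbove 0 = 0)]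

lemma proj1_1 (v : Tup V 3) : (proj 1 v).1 1 = v.1 2 := by
  rw [proj_apply, (by decide : (1 : Fin 3).succAbove 1 = 2)]

lemma proj2_0 (v : Tup V 3) : (proj 2 v).1 0 = v.1 0 := by
  rw [proj_apply, (by decide : (2 : Fin 3).succAbove 0 = 0)]

lemma proj2_1 (v : Tup V 3) : (proj 2 v).1 1 = v.1 1 := by
  rw [proj_apply, (by decide : (2 : Fin 3).succAbove 1 = 1)]

lemma proj0_0 (v : Tup V 3) : (proj 0 v).1 0 = v.1 1 := by
  rw [proj_apply, (by decide : (0 : Fin 3).succAbove 0 = 1)]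

lemma proj0_1 (v : Tup V 3) : (proj 0 v).1 1 = v.1 2 := by
  rw [proj_apply, (by decide : (0 : Fin 3).succAbove 1 = 2)]

def mk3 (α γ β : V) (h1 : α ≠ γ) (h2 : α ≠ β) (h3 : γ ≠ β) : Tup V 3 :=
  ⟨![α, γ, β], by
    intro i j hij
    fin_cases i <;> fin_cases j <;> simp_all⟩

end Aux

/-- A homogeneous 3-scheme yields an association scheme at the first
two levels: the composition numbers depend only on the color of the pair `(α, β)`. -/
theorem stmt0 {V : Type*} [Fintype V] (P : Colors V)
    (hscheme : IsMScheme 3 P) (hhom : Homogeneous P) :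
    ∀ Pi ∈ P 2, ∀ Pj ∈ P 2, ∀ Pk ∈ P 2, ∀ t ∈ Pk, ∀ t' ∈ Pk,
      compCount Pi Pj (t.1 0) (t.1 1) = compCount Pi Pj (t'.1 0) (t'.1 1) := by
  classical
  obtain ⟨hcoll, hlev⟩ := hscheme
  obtain ⟨hcompat, hreg, -⟩ := hlev 2 (by norm_num) (by norm_num)
  have h2 : Setoid.IsPartition (P 2) := hcoll 2 (by norm_num) (by norm_num)
  have h3 : Setoid.IsPartition (P 3) := hcoll 3 (by norm_num) (by norm_num)
  intro Pi hPi Pj hPj Pk hPk t ht t' ht'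
  have hfinT : Finite (Tup V 3) := Subtype.finite
  have hfinS : Finite (Set (Tup V 3)) := show Finite (Tup V 3 → Prop) from inferInstance
  set T : Tup V 2 → Set (Tup V 3) := fun u =>
    {v | proj 1 v = u ∧ proj 2 v ∈ Pi ∧ proj 0 v ∈ Pj} with hTdef
  -- Step 1: compCount equals the cardinality of T u
  have step1 : ∀ u : Tup V 2, compCount Pi Pj (u.1 0) (u.1 1) = (T u).ncard := by
    intro u
    have himg : {γ : V | (∃ w ∈ Pi, w.1 0 = u.1 0 ∧ w.1 1 = γ) ∧
        (∃ w ∈ Pj, w.1 0 = γ ∧ w.1 1 = u.1 1)} = (fun v : Tup V 3 => v.1 1) '' T u := by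
      ext γ
      constructor
      · rintro ⟨⟨wi, hwi, hwi0, hwi1⟩, ⟨wj, hwj, hwj0, hwj1⟩⟩
        have hαγ : u.1 0 ≠ γ := by
          rw [← hwi0, ← hwi1]; intro h; exact (by decide : (0 : Fin 2) ≠ 1) (wi.2 h)
        have hγβ : γ ≠ u.1 1 := by
          rw [← hwj0, ← hwj1]; intro h; exact (by decide : (0 : Fin 2) ≠ 1) (wj.2 h)
        have hαβ : u.1 0 ≠ u.1 1 := fun h => (by decide : (0 : Fin 2) ≠ 1) (u.2 h)
        refine ⟨mk3 (u.1 0) γ (u.1 1) hαγ hαβ hγβ, ⟨?_, ?_, ?_⟩, rfl⟩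
        · exact tup2_ext ((proj1_0 _).trans rfl) ((proj1_1 _).trans rfl)
        · have : proj 2 (mk3 (u.1 0) γ (u.1 1) hαγ hαβ hγβ) = wi :=
            tup2_ext ((proj2_0 _).trans hwi0.symm) ((proj2_1 _).trans hwi1.symm)
          rwa [this]
        · have : proj 0 (mk3 (u.1 0) γ (u.1 1) hαγ hαβ hγβ) = wj :=
            tup2_ext ((proj0_0 _).trans hwj0.symm) ((proj0_1 _).trans hwj1.symm)
          rwa [this]
      · rintro ⟨v, ⟨hp1, hp2, hp0⟩, rfl⟩
        have hv0 : v.1 0 = u.1 0 := by rw [← proj1_0 v, hp1]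
        have hv2 : v.1 2 = u.1 1 := by rw [← proj1_1 v, hp1]
        exact ⟨⟨proj 2 v, hp2, (proj2_0 v).trans hv0, proj2_1 v⟩,
          ⟨proj 0 v, hp0, proj0_0 v, (proj0_1 v).trans hv2⟩⟩
    have hinj : Set.InjOn (fun v : Tup V 3 => v.1 1) (T u) := by
      rintro v ⟨hp1, -, -⟩ v' ⟨hp1', -, -⟩ h
      refine tup3_ext ?_ h ?_
      · rw [← proj1_0 v, hp1, ← proj1_0 v', hp1']
      · rw [← proj1_1 v, hp1, ← proj1_1 v', hp1']
    rw [compCount, himg, Set.ncard_image_of_injOn hinj]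
  -- the unique color containing each triple
  have cspec : ∀ v : Tup V 3, (h3.2 v).choose ∈ P 3 ∧ v ∈ (h3.2 v).choose :=
    fun v => (h3.2 v).choose_spec.1
  set c : Tup V 3 → Set (Tup V 3) := fun v => (h3.2 v).choose with hcdef
  -- Step 2 key: per-color counts agree
  have key : ∀ C ∈ P 3, ∀ u ∈ Pk, ∀ u' ∈ Pk, (T u ∩ C).Nonempty →
      (T u ∩ C).ncard = (T u' ∩ C).ncard := by
    intro C hC u hu u' hu' ⟨w, hwT, hwC⟩
    have hfill : ∀ u'' : Tup V 2, ∀ v ∈ C, proj 1 v = u'' → v ∈ T u'' := by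
      intro u'' v hv hpv
      refine ⟨hpv, ?_, ?_⟩
      · obtain ⟨Q, hQ, hwQ, hvQ⟩ := hcompat C hC w hwC v hv 2
        rwa [unique_color h2 hQ hPi hwQ hwT.2.1] at hvQ
      · obtain ⟨Q, hQ, hwQ, hvQ⟩ := hcompat C hC w hwC v hv 0
        rwa [unique_color h2 hQ hPj hwQ hwT.2.2] at hvQ
    have e1 : T u ∩ C = {v ∈ C | proj 1 v = u} := by
      ext v
      exact ⟨fun ⟨hT, hC'⟩ => ⟨hC', hT.1⟩, fun ⟨hC', hp⟩ => ⟨hfill u v hC' hp, hC'⟩⟩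
    have e2 : T u' ∩ C = {v ∈ C | proj 1 v = u'} := by
      ext v
      exact ⟨fun ⟨hT, hC'⟩ => ⟨hC', hT.1⟩, fun ⟨hC', hp⟩ => ⟨hfill u' v hC' hp, hC'⟩⟩
    rw [e1, e2]
    exact hreg C hC 1 Pk hPk u hu u' hu'
  have keyall : ∀ C ∈ P 3, (T t ∩ C).ncard = (T t' ∩ C).ncard := by
    intro C hC
    rcases (T t ∩ C).eq_empty_or_nonempty with h | h
    · rcases (T t' ∩ C).eq_empty_or_nonempty with h' | h'
      · rw [h, h']
      · exact (key C hC t' ht' t ht h').symm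
    · exact key C hC t ht t' ht' h
  -- Step 3: sum over colors
  have hcolfin : (P 3).Finite := Set.toFinite _
  have hsum : ∀ u : Tup V 2, (T u).ncard = ∑ C ∈ hcolfin.toFinset, (T u ∩ C).ncard := by
    intro u
    have hTfin : (T u).Finite := Set.toFinite _
    rw [Set.ncard_eq_toFinset_card _ hTfin]
    rw [Finset.card_eq_sum_card_fiberwise (f := c) (t := hcolfin.toFinset)
      (fun v _ => hcolfin.mem_toFinset.2 (cspec v).1)]
    refine Finset.sum_congr rfl fun C hCmem => ?_
    have hC : C ∈ P 3 := hcolfin.mem_toFinset.1 hCmem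
    have hfe : hTfin.toFinset.filter (fun v => c v = C) = (Set.toFinite (T u ∩ C)).toFinset := by
      ext v
      simp only [Finset.mem_filter, Set.Finite.mem_toFinset, Set.mem_inter_iff]
      constructor
      · rintro ⟨h1, hcv⟩; exact ⟨h1, hcv ▸ (cspec v).2⟩
      · rintro ⟨h1, h2'⟩; exact ⟨h1, unique_color h3 (cspec v).1 hC (cspec v).2 h2'⟩
    rw [hfe, ← Set.ncard_eq_toFinset_card _ (Set.toFinite _)]
  rw [step1 t, step1 t', hsum t, hsum t']
  exact Finset.sum_congr rfl fun C hCmem => keyall C (hcolfin.mem_toFinset.1 hCmem)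
end

section
/- Let (P_1, P_2) be a coherent configuration on a finite set V. Define the partition P_3 of V^(3) by declaring (u_1,u_2,u_3) and (v_1,v_2,v_3) equivalent if and only if (u_1,u_2) and (v_1,v_2) lie in the same class of P_2, (u_1,u_3) and (v_1,v_3) lie in the same class of P_2, and (u_2,u_3) and (v_2,v_3) lie in the same class of P_2. Then (P_1, P_2, P_3) is a 3-scheme on V, i.e., it is compatible, regular and invariant at levels 2 and 3. -/
/-- Two triples are related iff all three of their pairwise projections have equal colors. -/
def rel3 {V : Type*} (P : Colors V) (u v : Tup V 3) : Prop :=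
  ∀ i : Fin 3, ∃ Q ∈ P 2, proj i u ∈ Q ∧ proj i v ∈ Q

/-- The partition of `V^(3)` into classes of `rel3`. -/
def level3 {V : Type*} (P : Colors V) : Set (Set (Tup V 3)) :=
  {C | ∃ u : Tup V 3, C = {v | rel3 P u v}}

/-- Extend a color system by the partition `level3` at level 3. -/
def extend3 {V : Type*} (P : Colors V) : Colors V := fun s =>
  match s with
  | 3 => level3 P
  | n => P n


section AuxStmt1
variable {V : Type*}

lemma permTup_permTup {s : ℕ} (σ τ : Equiv.Perm (Fin s)) (v : Tup V s) :
    permTup σ (permTup τ v) = permTup (τ * σ) v := rfl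

lemma permTup_one {s : ℕ} (v : Tup V s) : permTup 1 v = v := rfl

def pairMem (A : Set (Tup V 2)) (a b : V) : Prop :=
  ∃ w ∈ A, w.1 0 = a ∧ w.1 1 = b

lemma mem_iff_pairMem (A : Set (Tup V 2)) (u : Tup V 2) :
    u ∈ A ↔ pairMem A (u.1 0) (u.1 1) := by
  constructor
  · exact fun h => ⟨u, h, rfl, rfl⟩
  · rintro ⟨w, hw, h0, h1⟩
    rw [← tup2_ext h0 h1]; exact hw

def sw2 : Equiv.Perm (Fin 2) := Equiv.swap 0 1

lemma pairMem_swap (A : Set (Tup V 2)) (a b : V) :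
    pairMem (permTup sw2 '' A) a b ↔ pairMem A b a := by
  constructor
  · rintro ⟨w, ⟨t, ht, rfl⟩, h0, h1⟩
    exact ⟨t, ht, h1, h0⟩
  · rintro ⟨t, ht, h0, h1⟩
    exact ⟨permTup sw2 t, ⟨t, ht, rfl⟩, h1, h0⟩

lemma succAbove_perm_fact : ∀ (σ : Equiv.Perm (Fin 3)) (i : Fin 3),
    ∃ τ : Equiv.Perm (Fin 2), ∀ j, σ (i.succAbove j) = (σ i).succAbove (τ j) := by decide

lemma proj_permTup (σ : Equiv.Perm (Fin 3)) (i : Fin 3) :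
    ∃ τ : Equiv.Perm (Fin 2), ∀ w : Tup V 3,
      proj i (permTup σ w) = permTup τ (proj (σ i) w) := by
  obtain ⟨τ, hτ⟩ := succAbove_perm_fact σ i
  exact ⟨τ, fun w => Subtype.ext (funext fun j => congrArg w.1 (hτ j))⟩

lemma part_uniq {α : Type*} {c : Set (Set α)} (h : Setoid.IsPartition c)
    {Q Q' : Set α} {x : α} (hQ : Q ∈ c) (hQ' : Q' ∈ c) (hx : x ∈ Q) (hx' : x ∈ Q') :
    Q = Q' := by
  obtain ⟨b, -, hb⟩ := h.2 x
  rw [hb Q ⟨hQ, hx⟩, hb Q' ⟨hQ', hx'⟩]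

lemma count_lemma (A B : Set (Tup V 2)) (i : Fin 3) (u : Tup V 2)
    (S : Set (Tup V 3))
    (hS : ∀ w, w ∈ S ↔ proj i w = u ∧ pairMem A (u.1 0) (w.1 i) ∧ pairMem B (w.1 i) (u.1 1)) :
    S.ncard = compCount A B (u.1 0) (u.1 1) := by
  have hinj : Set.InjOn (fun w : Tup V 3 => w.1 i) S := by
    intro w hw w' hw' h
    have h1 := ((hS w).1 hw).1
    have h2 := ((hS w').1 hw').1
    apply Subtype.ext; funext k
    by_cases hk : k = i
    · subst hk; exact h
    · obtain ⟨j, rfl⟩ := Fin.exists_succAbove_eq (Ne.symm (fun e => hk e.symm))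
      have e1 : w.1 (i.succAbove j) = u.1 j := congrFun (congrArg Subtype.val h1) j
      have e2 : w'.1 (i.succAbove j) = u.1 j := congrFun (congrArg Subtype.val h2) j
      rw [e1, e2]
  have himg : (fun w : Tup V 3 => w.1 i) '' S
      = {γ : V | (∃ w ∈ A, w.1 0 = u.1 0 ∧ w.1 1 = γ) ∧ (∃ w ∈ B, w.1 0 = γ ∧ w.1 1 = u.1 1)} := by
    ext γ
    constructor
    · rintro ⟨w, hw, rfl⟩
      exact ⟨((hS w).1 hw).2.1, ((hS w).1 hw).2.2⟩
    · rintro ⟨hA, hB⟩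
      have hγ0 : γ ≠ u.1 0 := by
        obtain ⟨t, -, h0, h1⟩ := hA
        rintro e; rw [← h0, ← h1] at e
        exact absurd (t.2 e.symm) (by decide)
      have hγ1 : γ ≠ u.1 1 := by
        obtain ⟨t, -, h0, h1⟩ := hB
        rintro e; rw [← h0, ← h1] at e
        exact absurd (t.2 e) (by decide)
      have hne : ∀ j : Fin 2, γ ≠ u.1 j := by
        rw [Fin.forall_fin_two]; exact ⟨hγ0, hγ1⟩
      set f : Fin 3 → V := Fin.insertNth i γ u.1 with hf
      have hfi : f i = γ := by
        rw [hf]; exact Fin.insertNth_apply_same (α := fun _ => V) i γ u.1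
      have hfs : ∀ j, f (i.succAbove j) = u.1 j := by
        rw [hf]; exact fun j => Fin.insertNth_apply_succAbove (α := fun _ => V) i γ u.1 j
      have hfinj : Function.Injective f := by
        intro k k' e
        by_cases hk : k = i <;> by_cases hk' : k' = i
        · rw [hk, hk']
        · obtain ⟨j, rfl⟩ := Fin.exists_succAbove_eq (Ne.symm (fun x => hk' x.symm))
          subst hk; rw [hfi, hfs] at e; exact absurd e (hne j)
        · obtain ⟨j, rfl⟩ := Fin.exists_succAbove_eq (Ne.symm (fun x => hk x.symm))
          subst hk'; rw [hfi, hfs] at e; exact absurd e.symm (hne j)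
        · obtain ⟨j, rfl⟩ := Fin.exists_succAbove_eq (Ne.symm (fun x => hk x.symm))
          obtain ⟨j', rfl⟩ := Fin.exists_succAbove_eq (Ne.symm (fun x => hk' x.symm))
          rw [hfs, hfs] at e
          rw [u.2 e]
      refine ⟨⟨f, hfinj⟩, (hS _).2 ⟨Subtype.ext (funext fun j => hfs j), ?_, ?_⟩, hfi⟩
      · show pairMem A (u.1 0) (f i); rw [hfi]; exact hA
      · show pairMem B (f i) (u.1 1); rw [hfi]; exact hB
  calc S.ncard = ((fun w : Tup V 3 => w.1 i) '' S).ncard := (Set.ncard_image_of_injOn hinj).symm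
    _ = _ := by rw [himg]; rfl

variable (P : Colors V)

lemma rel3_refl (hP2 : Setoid.IsPartition (P 2)) (u : Tup V 3) : rel3 P u u := by
  intro i
  obtain ⟨Q, hQ, -⟩ := hP2.2 (proj i u)
  exact ⟨Q, hQ.1, hQ.2, hQ.2⟩

lemma rel3_symm {u v : Tup V 3} (h : rel3 P u v) : rel3 P v u := by
  intro i; obtain ⟨Q, hQ, h1, h2⟩ := h i; exact ⟨Q, hQ, h2, h1⟩

lemma rel3_trans (hP2 : Setoid.IsPartition (P 2)) {u v w : Tup V 3}
    (h1 : rel3 P u v) (h2 : rel3 P v w) : rel3 P u w := by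
  intro i
  obtain ⟨Q, hQ, hu, hv⟩ := h1 i
  obtain ⟨Q', hQ', hv', hw⟩ := h2 i
  rw [part_uniq hP2 hQ' hQ hv' hv] at hw
  exact ⟨Q, hQ, hu, hw⟩

lemma rel3_iff_classes (hP2 : Setoid.IsPartition (P 2)) (a w : Tup V 3)
    (Qk : Fin 3 → Set (Tup V 2)) (hmem : ∀ k, Qk k ∈ P 2) (hka : ∀ k, proj k a ∈ Qk k) :
    rel3 P a w ↔ ∀ k, proj k w ∈ Qk k := by
  constructor
  · intro h k
    obtain ⟨Q', hQ', ha', hw'⟩ := h k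
    rwa [part_uniq hP2 hQ' (hmem k) ha' (hka k)] at hw'
  · exact fun h k => ⟨Qk k, hmem k, hka k, h k⟩

lemma level3_partition (hP2 : Setoid.IsPartition (P 2)) :
    Setoid.IsPartition (level3 P) := by
  constructor
  · rintro ⟨a, ha⟩
    have : a ∈ (∅ : Set (Tup V 3)) := by rw [ha]; exact rel3_refl P hP2 a
    exact this
  · intro a
    refine ⟨{v | rel3 P a v}, ⟨⟨a, rfl⟩, rel3_refl P hP2 a⟩, ?_⟩
    rintro C ⟨⟨b, rfl⟩, hab⟩
    ext v
    exact ⟨fun h => rel3_trans P hP2 (rel3_symm P hab) h,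
           fun h => rel3_trans P hP2 hab h⟩

lemma rel3_perm (hP2 : Setoid.IsPartition (P 2)) (hInv2 : InvariantAt P 2)
    (σ : Equiv.Perm (Fin 3)) {a w : Tup V 3} (h : rel3 P a w) :
    rel3 P (permTup σ a) (permTup σ w) := by
  intro i
  obtain ⟨τ, hτ⟩ := proj_permTup (V := V) σ i
  obtain ⟨Q, hQ, ha, hw⟩ := h (σ i)
  exact ⟨permTup τ '' Q, hInv2 Q hQ τ, by rw [hτ]; exact ⟨_, ha, rfl⟩,
         by rw [hτ]; exact ⟨_, hw, rfl⟩⟩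

lemma succAbove_fact_A : ∀ i : Fin 3,
    ((i.succAbove 1).succAbove 0 = i.succAbove 0 ∧ (i.succAbove 1).succAbove 1 = i) ∨
    ((i.succAbove 1).succAbove 0 = i ∧ (i.succAbove 1).succAbove 1 = i.succAbove 0) := by decide

lemma succAbove_fact_B : ∀ i : Fin 3,
    ((i.succAbove 0).succAbove 0 = i ∧ (i.succAbove 0).succAbove 1 = i.succAbove 1) ∨
    ((i.succAbove 0).succAbove 0 = i.succAbove 1 ∧ (i.succAbove 0).succAbove 1 = i) := by decide

lemma fin3_cases : ∀ i k : Fin 3, k = i ∨ k = i.succAbove 0 ∨ k = i.succAbove 1 := by decide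

lemma projMem_iff (Q' : Set (Tup V 2)) (w : Tup V 3) (j : Fin 3) :
    proj j w ∈ Q' ↔ pairMem Q' (w.1 (j.succAbove 0)) (w.1 (j.succAbove 1)) :=
  mem_iff_pairMem Q' (proj j w)

end AuxStmt1

/-- A coherent configuration extends to a 3-scheme via `level3`. -/
theorem stmt1 {V : Type*} [Fintype V] (P : Colors V)
    (hscheme : IsMScheme 2 P)
    (hcomp : ∀ Pi ∈ P 2, ∀ Pj ∈ P 2, ∀ Pk ∈ P 2, ∀ t ∈ Pk, ∀ t' ∈ Pk,
      compCount Pi Pj (t.1 0) (t.1 1) = compCount Pi Pj (t'.1 0) (t'.1 1)) :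
    IsMScheme 3 (extend3 P) := by
  obtain ⟨hcoll, hprops⟩ := hscheme
  have hP2 : Setoid.IsPartition (P 2) := hcoll 2 (by norm_num) le_rfl
  have hInv2 : InvariantAt P 2 := (hprops 1 le_rfl le_rfl).2.2
  constructor
  · intro s h1 h3
    interval_cases s
    · exact hcoll 1 le_rfl (by norm_num)
    · exact hP2
    · exact level3_partition P hP2
  · intro s h1 h2
    have h2' : s ≤ 2 := by omega
    interval_cases s
    · exact hprops 1 le_rfl le_rfl
    · refine ⟨?_, ?_, ?_⟩
      · -- CompatibleAt (extend3 P) 2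
        rintro C ⟨a, rfl⟩ u hu v hv i
        obtain ⟨Q, hQ, ha, hu'⟩ := hu i
        obtain ⟨Q', hQ', ha', hv'⟩ := hv i
        rw [part_uniq hP2 hQ' hQ ha' ha] at hv'
        exact ⟨Q, hQ, hu', hv'⟩
      · -- RegularAt (extend3 P) 2
        rintro C ⟨a, rfl⟩ i Q hQ u hu v hv
        have hQk : ∀ k : Fin 3, ∃ Qk ∈ P 2, proj k a ∈ Qk := by
          intro k
          obtain ⟨b, hb, -⟩ := hP2.2 (proj k a)
          exact ⟨b, hb.1, hb.2⟩
        choose Qk hQkmem hQka using hQk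
        by_cases hia : proj i a ∈ Q
        · have hchar : ∃ A ∈ P 2, ∃ B ∈ P 2, ∀ u' : Tup V 2, u' ∈ Q →
              ∀ w : Tup V 3, (rel3 P a w ∧ proj i w = u') ↔
                (proj i w = u' ∧ pairMem A (u'.1 0) (w.1 i) ∧ pairMem B (w.1 i) (u'.1 1)) := by
            have hQiQ : Qk i = Q := part_uniq hP2 (hQkmem i) hQ (hQka i) hia
            have main : ∀ (A B : Set (Tup V 2)),
                (∀ (u' : Tup V 2) (w : Tup V 3), proj i w = u' →
                  (proj (i.succAbove 1) w ∈ Qk (i.succAbove 1) ↔ pairMem A (u'.1 0) (w.1 i))) →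
                (∀ (u' : Tup V 2) (w : Tup V 3), proj i w = u' →
                  (proj (i.succAbove 0) w ∈ Qk (i.succAbove 0) ↔ pairMem B (w.1 i) (u'.1 1))) →
                ∀ u' : Tup V 2, u' ∈ Q → ∀ w : Tup V 3, (rel3 P a w ∧ proj i w = u') ↔
                  (proj i w = u' ∧ pairMem A (u'.1 0) (w.1 i) ∧ pairMem B (w.1 i) (u'.1 1)) := by
              intro A B hAiff hBiff u' hu' w
              rw [rel3_iff_classes P hP2 a w Qk hQkmem hQka]
              constructor
              · rintro ⟨hall, hp⟩
                exact ⟨hp, (hAiff u' w hp).1 (hall _), (hBiff u' w hp).1 (hall _)⟩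
              · rintro ⟨hp, hA, hB⟩
                refine ⟨?_, hp⟩
                intro k
                rcases fin3_cases i k with hk | hk | hk
                · subst hk; rw [hQiQ, hp]; exact hu'
                · subst hk; exact (hBiff u' w hp).2 hB
                · subst hk; exact (hAiff u' w hp).2 hA
            have hcoord : ∀ (u' : Tup V 2) (w : Tup V 3), proj i w = u' →
                w.1 (i.succAbove 0) = u'.1 0 ∧ w.1 (i.succAbove 1) = u'.1 1 := by
              intro u' w hp
              exact ⟨congrFun (congrArg Subtype.val hp) 0, congrFun (congrArg Subtype.val hp) 1⟩
            rcases succAbove_fact_A i with ⟨hA0, hA1⟩ | ⟨hA0, hA1⟩ <;>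
              rcases succAbove_fact_B i with ⟨hB0, hB1⟩ | ⟨hB0, hB1⟩
            · refine ⟨Qk (i.succAbove 1), hQkmem _, Qk (i.succAbove 0),
                hQkmem _, main _ _ ?_ ?_⟩
              · intro u' w hp
                rw [projMem_iff, hA0, hA1, (hcoord u' w hp).1]
              · intro u' w hp
                rw [projMem_iff, hB0, hB1, (hcoord u' w hp).2]
            · refine ⟨Qk (i.succAbove 1), hQkmem _, permTup sw2 '' Qk (i.succAbove 0),
                hInv2 _ (hQkmem _) sw2, main _ _ ?_ ?_⟩
              · intro u' w hp
                rw [projMem_iff, hA0, hA1, (hcoord u' w hp).1]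
              · intro u' w hp
                rw [projMem_iff, hB0, hB1, (hcoord u' w hp).2, pairMem_swap]
            · refine ⟨permTup sw2 '' Qk (i.succAbove 1), hInv2 _ (hQkmem _) sw2,
                Qk (i.succAbove 0), hQkmem _, main _ _ ?_ ?_⟩
              · intro u' w hp
                rw [projMem_iff, hA0, hA1, (hcoord u' w hp).1, pairMem_swap]
              · intro u' w hp
                rw [projMem_iff, hB0, hB1, (hcoord u' w hp).2]
            · refine ⟨permTup sw2 '' Qk (i.succAbove 1), hInv2 _ (hQkmem _) sw2,
                permTup sw2 '' Qk (i.succAbove 0), hInv2 _ (hQkmem _) sw2, main _ _ ?_ ?_⟩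
              · intro u' w hp
                rw [projMem_iff, hA0, hA1, (hcoord u' w hp).1, pairMem_swap]
              · intro u' w hp
                rw [projMem_iff, hB0, hB1, (hcoord u' w hp).2, pairMem_swap]
          obtain ⟨A, hA, B, hB, hch⟩ := hchar
          have hcount : ∀ u' : Tup V 2, u' ∈ Q →
              {w ∈ {v | rel3 P a v} | proj i w = u'}.ncard = compCount A B (u'.1 0) (u'.1 1) := by
            intro u' hu'
            exact count_lemma A B i u' _ (fun w => hch u' hu' w)
          rw [hcount u hu, hcount v hv]
          exact hcomp A hA B hB Q hQ u hu v hv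
        · have hempty : ∀ u' : Tup V 2, u' ∈ Q →
              {w ∈ {v | rel3 P a v} | proj i w = u'} = ∅ := by
            intro u' hu'
            ext w
            simp only [Set.mem_sep_iff, Set.mem_empty_iff_false, iff_false, not_and]
            intro hw hp
            obtain ⟨Q', hQ', ha', hw'⟩ := hw i
            rw [hp] at hw'
            exact hia ((part_uniq hP2 hQ' hQ hw' hu') ▸ ha')
          rw [hempty u hu, hempty v hv]
      · -- InvariantAt (extend3 P) 3
        rintro C ⟨a, rfl⟩ σ
        refine ⟨permTup σ a, ?_⟩
        ext v
        constructor
        · rintro ⟨w, hw, rfl⟩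
          exact rel3_perm P hP2 hInv2 σ hw
        · intro hv
          refine ⟨permTup σ⁻¹ v, ?_, ?_⟩
          · have := rel3_perm P hP2 hInv2 σ⁻¹ hv
            rwa [permTup_permTup, mul_inv_cancel, permTup_one] at this
          · rw [permTup_permTup, inv_mul_cancel, permTup_one]
end

section
/- Let G be a permutation group on a finite set V that acts transitively on V, and let m be an integer with 1 ≤ m < |V| and gcd(m!, |G|) = 1. Then the orbit m-collection of G is a homogeneous antisymmetric m-scheme on V: it is compatible, regular and invariant at every level 1 < s ≤ m, its level-1 partition has a single class, and for every orbit P of G on V^(s) (1 < s ≤ m) and every non-identity σ ∈ Sym_s one has P^σ ≠ P. -/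
def orbitColors {V : Type*} (G : Subgroup (Equiv.Perm V)) : Colors V :=
  fun s => {C | ∃ v : Tup V s, C = {w | ∃ g ∈ G, w.1 = ⇑g ∘ v.1}}

/-! Deleting a coordinate and permuting coordinates commute with the coordinatewise action of
`G` on tuples of distinct elements; this gives compatibility and invariance, and regularity holds
because an element of `G` moving `u` to `v` maps the fibre over `u` bijectively onto the fibre
over `v`. If a coordinate permutation `σ` maps an orbit `G v` to itself, then `v ∘ σ = g ∘ v` for
some `g ∈ G`, hence `v ∘ σ ^ k = g ^ k ∘ v` and, as the entries of `v` are distinct, the order of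
`σ` divides that of `g`. So it divides both `s!` and `|G|`, and `σ = 1`. -/

namespace Tup

variable {V : Type*} {s : ℕ}

@[ext]
lemma ext {v w : Tup V s} (h : v.1 = w.1) : v = w := Subtype.ext h

instance : MulAction (Equiv.Perm V) (Tup V s) where
  smul g v := ⟨g ∘ v.1, g.injective.comp v.2⟩
  one_smul _ := rfl
  mul_smul _ _ _ := rfl

@[simp]
lemma coe_smul (g : Equiv.Perm V) (v : Tup V s) : (g • v).1 = g ∘ v.1 := rfl

lemma proj_smul (i : Fin (s + 1)) (g : Equiv.Perm V) (v : Tup V (s + 1)) :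
    proj i (g • v) = g • proj i v := rfl

lemma permTup_smul (σ : Equiv.Perm (Fin s)) (g : Equiv.Perm V) (v : Tup V s) :
    permTup σ (g • v) = g • permTup σ v := rfl

lemma permTup_mul (σ τ : Equiv.Perm (Fin s)) (v : Tup V s) :
    permTup (σ * τ) v = permTup τ (permTup σ v) := rfl

lemma eq_one_of_permTup_eq_self {σ : Equiv.Perm (Fin s)} {v : Tup V s}
    (h : permTup σ v = v) : σ = 1 :=
  Equiv.ext fun x => v.2 (congrFun (congrArg Subtype.val h) x)

lemma permTup_pow_eq_smul {σ : Equiv.Perm (Fin s)} {g : Equiv.Perm V} {v : Tup V s}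
    (h : permTup σ v = g • v) (n : ℕ) : permTup (σ ^ n) v = g ^ n • v := by
  induction n with
  | zero => rfl
  | succ n ih => rw [pow_succ', permTup_mul, h, permTup_smul, ih, pow_succ', mul_smul]

lemma orderOf_dvd_of_permTup_eq_smul {σ : Equiv.Perm (Fin s)} {g : Equiv.Perm V}
    {v : Tup V s} (h : permTup σ v = g • v) : orderOf σ ∣ orderOf g :=
  orderOf_dvd_of_pow_eq_one <| eq_one_of_permTup_eq_self <| by
    rw [permTup_pow_eq_smul h, pow_orderOf_eq_one, one_smul]

end Tup

namespace MulAction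

variable {G α β : Type*} [Group G] [MulAction G α] [MulAction G β] {f : α → β}

lemma image_orbit_of_map_smul (hf : ∀ (g : G) a, f (g • a) = g • f a) (a : α) :
    f '' orbit G a = orbit G (f a) := by
  simp only [orbit, ← Set.range_comp, Function.comp_def, hf]

lemma ncard_fiber_smul (hf : ∀ (g : G) a, f (g • a) = g • f a) (a : α) (g : G) (b : β) :
    {w ∈ orbit G a | f w = g • b}.ncard = {w ∈ orbit G a | f w = b}.ncard := by
  rw [← Set.ncard_smul_set g {w ∈ orbit G a | f w = b}]
  congr 1
  ext w
  rw [Set.mem_smul_set_iff_inv_smul_mem]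
  change w ∈ orbit G a ∧ f w = g • b ↔ g⁻¹ • w ∈ orbit G a ∧ f (g⁻¹ • w) = b
  rw [← orbit_eq_iff (a := g⁻¹ • w), orbit_smul, orbit_eq_iff, hf, inv_smul_eq_iff]

end MulAction

section orbitColors

open MulAction

variable {V : Type*} (G : Subgroup (Equiv.Perm V))

lemma orbit_eq_setOf {s : ℕ} (v : Tup V s) :
    orbit G v = {w | ∃ g ∈ G, w.1 = ⇑g ∘ v.1} := by
  ext w
  simp [mem_orbit_iff, Tup.ext_iff, Subgroup.smul_def, eq_comm]

lemma mem_orbitColors {s : ℕ} {C : Set (Tup V s)} :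
    C ∈ orbitColors G s ↔ ∃ v, C = orbit G v := by
  simp only [orbitColors, orbit_eq_setOf]; rfl

lemma isPartition_orbitColors (s : ℕ) : Setoid.IsPartition (orbitColors G s) := by
  convert Setoid.isPartition_classes (orbitRel G (Tup V s))
  ext C
  rw [mem_orbitColors]
  rfl

lemma image_proj_orbit {s : ℕ} (i : Fin (s + 1)) (v : Tup V (s + 1)) :
    proj i '' orbit G v = orbit G (proj i v) :=
  image_orbit_of_map_smul (G := G) (fun g => Tup.proj_smul i (g : Equiv.Perm V)) v

lemma compatibleAt_orbitColors (s : ℕ) : CompatibleAt (orbitColors G) s := by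
  intro C hC u hu v hv i
  obtain ⟨c, rfl⟩ := (mem_orbitColors G).1 hC
  refine ⟨_, (mem_orbitColors G).2 ⟨proj i c, rfl⟩, ?_⟩
  rw [← image_proj_orbit]
  exact ⟨Set.mem_image_of_mem _ hu, Set.mem_image_of_mem _ hv⟩

lemma regularAt_orbitColors (s : ℕ) : RegularAt (orbitColors G) s := by
  intro C hC i Q hQ u hu v hv
  obtain ⟨c, rfl⟩ := (mem_orbitColors G).1 hC
  obtain ⟨q, rfl⟩ := (mem_orbitColors G).1 hQ
  obtain ⟨g, rfl⟩ := mem_orbit_iff.1 hu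
  obtain ⟨h, rfl⟩ := mem_orbit_iff.1 hv
  have hproj (g : G) (w : Tup V (s + 1)) : proj i (g • w) = g • proj i w :=
    Tup.proj_smul i (g : Equiv.Perm V) w
  rw [ncard_fiber_smul hproj, ncard_fiber_smul hproj]

lemma image_permTup_orbit {s : ℕ} (σ : Equiv.Perm (Fin s)) (v : Tup V s) :
    permTup σ '' orbit G v = orbit G (permTup σ v) :=
  image_orbit_of_map_smul (G := G) (fun g => Tup.permTup_smul σ (g : Equiv.Perm V)) v

lemma invariantAt_orbitColors (s : ℕ) : InvariantAt (orbitColors G) s := by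
  intro C hC σ
  obtain ⟨c, rfl⟩ := (mem_orbitColors G).1 hC
  exact (mem_orbitColors G).2 ⟨permTup σ c, image_permTup_orbit G σ c⟩

lemma isMScheme_orbitColors (m : ℕ) : IsMScheme m (orbitColors G) :=
  ⟨fun s _ _ => isPartition_orbitColors G s, fun s _ _ =>
    ⟨compatibleAt_orbitColors G s, regularAt_orbitColors G s, invariantAt_orbitColors G (s + 1)⟩⟩

lemma orbit_eq_univ_of_forall_exists_apply_eq (htrans : ∀ u v : V, ∃ g ∈ G, g u = v)
    (v : Tup V 1) : orbit G v = Set.univ := by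
  refine Set.eq_univ_of_forall fun w => ?_
  obtain ⟨g, hg, hgv⟩ := htrans (v.1 0) (w.1 0)
  exact mem_orbit_iff.2 ⟨⟨g, hg⟩, Tup.ext <| funext fun x => by rw [Subsingleton.elim x 0]; exact hgv⟩

lemma homogeneous_orbitColors [Nonempty V] (htrans : ∀ u v : V, ∃ g ∈ G, g u = v) :
    Homogeneous (orbitColors G) := by
  have : Nonempty (Tup V 1) :=
    ⟨⟨fun _ => Classical.arbitrary V, Function.injective_of_subsingleton _⟩⟩
  refine ⟨Set.univ, ?_⟩
  ext C
  simp [mem_orbitColors, orbit_eq_univ_of_forall_exists_apply_eq G htrans]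

lemma antisymmetricAt_orbitColors {s : ℕ} (hs : Nat.Coprime s.factorial (Nat.card G)) :
    AntisymmetricAt (orbitColors G) s := by
  intro C hC σ hσ hσC
  obtain ⟨v, rfl⟩ := (mem_orbitColors G).1 hC
  rw [image_permTup_orbit, orbit_eq_iff] at hσC
  obtain ⟨g, hg⟩ := mem_orbit_iff.1 hσC
  have hσg : orderOf σ ∣ Nat.card G := by
    refine dvd_trans ?_ (orderOf_dvd_natCard g)
    rw [← orderOf_submonoid]
    exact Tup.orderOf_dvd_of_permTup_eq_smul hg.symm
  have hσs : orderOf σ ∣ s.factorial := by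
    simpa [Fintype.card_perm] using orderOf_dvd_card (x := σ)
  exact hσ (orderOf_eq_one_iff.1 (Nat.eq_one_of_dvd_coprimes hs hσs hσg))

end orbitColors

theorem stmt4_general {V : Type*} [Fintype V] (G : Subgroup (Equiv.Perm V)) (m : ℕ)
    (htrans : ∀ u v : V, ∃ g ∈ G, g u = v)
    (hm2 : m < Fintype.card V)
    (hgcd : Nat.gcd (Nat.factorial m) (Nat.card G) = 1) :
    IsMScheme m (orbitColors G) ∧ Homogeneous (orbitColors G) ∧
      AntisymmetricColl m (orbitColors G) := by
  have : Nonempty V := Fintype.card_pos_iff.mp (by omega)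
  refine ⟨isMScheme_orbitColors G m, homogeneous_orbitColors G htrans, fun s _ hsm => ?_⟩
  exact antisymmetricAt_orbitColors G <|
    Nat.Coprime.coprime_dvd_left (Nat.factorial_dvd_factorial hsm) hgcd

/-- If `G` is transitive, `1 ≤ m < |V|` and `gcd(m!, |G|) = 1`, then the
orbit `m`-collection is a homogeneous antisymmetric `m`-scheme. -/
theorem stmt4 {V : Type*} [Fintype V] (G : Subgroup (Equiv.Perm V)) (m : ℕ)
    (htrans : ∀ u v : V, ∃ g ∈ G, g u = v)
    (hm1 : 1 ≤ m) (hm2 : m < Fintype.card V)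
    (hgcd : Nat.gcd (Nat.factorial m) (Nat.card G) = 1) :
    IsMScheme m (orbitColors G) ∧ Homogeneous (orbitColors G) ∧
      AntisymmetricColl m (orbitColors G) :=
  stmt4_general G m htrans hm2 hgcd
end

section
/- Let n ≥ 2 be an integer and let r be the smallest prime divisor of n. Then there exists no homogeneous antisymmetric r-scheme on a set of n points. -/
/-!
By compatibility and regularity, deleting the first coordinate maps a color at level `s + 1`
onto a single color at level `s` with fibres of equal size. Starting from the unique color at
level 1, of size `n`, every color at level `s ≤ r` therefore has size divisible by `n`.
An element `ρ` of order `r` in `Sym_r` permutes the colors at level `r` without fixed points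
(antisymmetry), so they split into `ρ`-orbits of size `r` on which `|C| / n` is constant.
Hence `n * r` divides `∑ |C| = n (n - 1) ⋯ (n - r + 1)`, i.e. `r` divides one of the factors
`n - 1, …, n - r + 1`, which is impossible when `r ∣ n`.
-/

open Finset Function

theorem Nat.Prime.dvd_card_of_isPeriodicPt {α : Type*} {p : ℕ} (hp : p.Prime) {f : α → α}
    {s : Finset α} (hs : Set.MapsTo f s s) (hper : ∀ a ∈ s, IsPeriodicPt f p a)
    (hfix : ∀ a ∈ s, f a ≠ a) : p ∣ #s := by
  classical
  have : Fact p.Prime := ⟨hp⟩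
  let F : Function.End s := hs.restrict f s s
  have hF : F ^ p ^ 1 = 1 := by
    rw [pow_one]
    funext a
    show (hs.restrict f s s)^[p] a = a
    rw [hs.iterate_restrict]
    exact Subtype.ext (hper a a.2)
  have hfixF : Fintype.card F.fixedPoints = 0 := by
    rw [Fintype.card_eq_zero_iff]
    exact ⟨fun ⟨a, ha⟩ => hfix a a.2 (congrArg Subtype.val ha)⟩
  simpa [hfixF, Nat.modEq_zero_iff_dvd] using Equiv.Perm.card_fixedPoints_modEq hF

theorem Nat.Prime.dvd_sum_of_isPeriodicPt {α : Type*} {p : ℕ} (hp : p.Prime) {f : α → α}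
    {s : Finset α} (hs : Set.MapsTo f s s) (hper : ∀ a ∈ s, IsPeriodicPt f p a)
    (hfix : ∀ a ∈ s, f a ≠ a) {g : α → ℕ} (hg : ∀ a ∈ s, g (f a) = g a) :
    p ∣ ∑ a ∈ s, g a := by
  classical
  rw [Finset.sum_comp (fun b => b) g]
  refine Finset.dvd_sum fun b _ => Dvd.dvd.mul_right ?_ b
  have hmaps : Set.MapsTo f ↑{a ∈ s | g a = b} ↑{a ∈ s | g a = b} := by
    intro a ha
    rw [mem_coe, mem_filter] at ha ⊢
    exact ⟨hs ha.1, (hg a ha.1).trans ha.2⟩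
  exact hp.dvd_card_of_isPeriodicPt hmaps (fun a ha => hper a (mem_filter.1 ha).1)
    (fun a ha => hfix a (mem_filter.1 ha).1)

theorem Nat.Prime.not_mul_dvd_descFactorial {n r : ℕ} (hr : r.Prime) (hrn : r ∣ n)
    (hn : 0 < n) : ¬ n * r ∣ n.descFactorial r := by
  intro h
  have hrle : r ≤ n := Nat.le_of_dvd hn hrn
  have hdesc := Nat.succ_descFactorial_succ (n - 1) (r - 1)
  rw [Nat.sub_add_cancel hn, Nat.sub_add_cancel hr.pos] at hdesc
  rw [hdesc, Nat.mul_dvd_mul_iff_left hn, Nat.descFactorial_eq_prod_range] at h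
  obtain ⟨i, hi, hdvd⟩ := hr.prime.exists_mem_finset_dvd h
  rw [mem_range] at hi
  have hri : r ∣ i + 1 := by
    simpa [show n - (n - 1 - i) = i + 1 by omega] using Nat.dvd_sub hrn hdvd
  have := Nat.le_of_dvd (by omega) hri
  omega

theorem Set.ncard_eq_ncard_mul_of_fiber {α β : Type*} {f : α → β} {C : Set α} {Q : Set β}
    (hC : C.Finite) (hQ : Q.Finite) (hf : Set.MapsTo f C Q) {c : ℕ}
    (hc : ∀ q ∈ Q, {w ∈ C | f w = q}.ncard = c) : C.ncard = Q.ncard * c := by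
  classical
  rw [Set.ncard_eq_toFinset_card C hC, Set.ncard_eq_toFinset_card Q hQ,
    card_eq_sum_card_fiberwise (t := hQ.toFinset) (by simpa using hf)]
  refine sum_const_nat fun q hq => ?_
  rw [← hc q (hQ.mem_toFinset.1 hq), ← Set.ncard_coe_finset]
  congr 1
  ext w
  simp

theorem Setoid.IsPartition.sum_ncard {X : Type*} [Finite X] {P : Set (Set X)}
    (hP : Setoid.IsPartition P) : ∑ C ∈ (Set.toFinite P).toFinset, C.ncard = Nat.card X := by
  rw [← Set.ncard_univ, hP.ncard_eq_finsum]
  simp_rw [Set.univ_inter]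
  rw [finsum_set_coe_eq_finsum_mem (f := Set.ncard),
    finsum_mem_eq_finite_toFinset_sum _ (Set.toFinite P)]

instance {V : Type*} [Finite V] (s : ℕ) : Finite (Tup V s) :=
  Subtype.finite

theorem card_tup (V : Type*) [Fintype V] (s : ℕ) :
    Nat.card (Tup V s) = (Fintype.card V).descFactorial s := by
  classical
  rw [show Nat.card (Tup V s) = Nat.card (Fin s ↪ V) from
      Nat.card_congr (Equiv.subtypeInjectiveEquivEmbedding _ _), Nat.card_eq_fintype_card,
    Fintype.card_embedding_eq, Fintype.card_fin]

section Colors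

variable {V : Type*} {P : Colors V}

theorem permTup_one_s8 {s : ℕ} : permTup (V := V) (1 : Equiv.Perm (Fin s)) = id :=
  rfl

theorem permTup_iterate {s : ℕ} (σ : Equiv.Perm (Fin s)) (k : ℕ) :
    (permTup (V := V) σ)^[k] = permTup (σ ^ k) := by
  induction k with
  | zero => rfl
  | succ k ih =>
    funext v
    rw [iterate_succ_apply', ih, pow_succ]
    rfl

theorem permTup_injective {s : ℕ} (σ : Equiv.Perm (Fin s)) :
    Injective (permTup (V := V) σ) := fun _ _ h =>
  Subtype.ext <| σ.surjective.injective_comp_right (congrArg Subtype.val h)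

theorem Homogeneous.eq_singleton_univ (h : Homogeneous P) (hP : Setoid.IsPartition (P 1)) :
    P 1 = {Set.univ} := by
  obtain ⟨C, hC⟩ := h
  have := hP.sUnion_eq_univ
  rw [hC, Set.sUnion_singleton] at this
  rw [hC, this]

theorem IsMScheme.invariantAt {m s : ℕ} (hP : IsMScheme m P) (hs : 2 ≤ s) (hsm : s ≤ m) :
    InvariantAt P s := by
  obtain ⟨k, rfl⟩ : ∃ k, s = k + 1 := ⟨s - 1, by omega⟩
  exact (hP.2 k (by omega) hsm).2.2

theorem exists_color_ncard_dvd [Finite V] {s : ℕ} (hs : Setoid.IsPartition (P s))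
    (hs' : Setoid.IsPartition (P (s + 1))) (hcomp : CompatibleAt P s) (hreg : RegularAt P s)
    {C : Set (Tup V (s + 1))} (hC : C ∈ P (s + 1)) : ∃ Q ∈ P s, Q.ncard ∣ C.ncard := by
  obtain ⟨u, hu⟩ := Set.nonempty_iff_ne_empty.2 fun h => hs'.1 (h ▸ hC)
  obtain ⟨Q, ⟨hQ, huQ⟩, -⟩ := hs.2 (proj 0 u)
  have hmaps : Set.MapsTo (proj 0) C Q := fun v hv => by
    obtain ⟨Q', hQ', huQ', hvQ'⟩ := hcomp C hC u hu v hv 0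
    rwa [(hs.2 (proj 0 u)).unique ⟨hQ, huQ⟩ ⟨hQ', huQ'⟩]
  exact ⟨Q, hQ, Dvd.intro _ (Set.ncard_eq_ncard_mul_of_fiber (Set.toFinite C) (Set.toFinite Q)
    hmaps fun q hq => hreg C hC 0 Q hQ q hq (proj 0 u) huQ).symm⟩

theorem IsMScheme.card_dvd_ncard [Fintype V] {m : ℕ} (hP : IsMScheme m P) (hhom : Homogeneous P)
    {s : ℕ} (hs : 1 ≤ s) (hsm : s ≤ m) {C : Set (Tup V s)} (hC : C ∈ P s) :
    Fintype.card V ∣ C.ncard := by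
  induction s, hs using Nat.le_induction with
  | base =>
    rw [hhom.eq_singleton_univ (hP.1 1 le_rfl hsm), Set.mem_singleton_iff] at hC
    rw [hC, Set.ncard_univ, card_tup, Nat.descFactorial_one]
  | succ s hs ih =>
    obtain ⟨hcomp, hreg, -⟩ := hP.2 s hs hsm
    obtain ⟨Q, hQ, hdvd⟩ :=
      exists_color_ncard_dvd (hP.1 s hs (by omega)) (hP.1 (s + 1) (by omega) hsm) hcomp hreg hC
    exact (ih (by omega) hQ).trans hdvd

theorem AntisymmetricAt.dvd_sum_of_prime [Finite V] {r : ℕ} (hanti : AntisymmetricAt P r)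
    (hr : r.Prime) (hinv : InvariantAt P r) {g : Set (Tup V r) → ℕ}
    (hg : ∀ σ C, g (permTup σ '' C) = g C) :
    r ∣ ∑ C ∈ (Set.toFinite (P r)).toFinset, g C := by
  have : Fact r.Prime := ⟨hr⟩
  obtain ⟨ρ, hρ⟩ : ∃ ρ : Equiv.Perm (Fin r), orderOf ρ = r :=
    exists_prime_orderOf_dvd_card r (by
      simpa [Fintype.card_perm] using Nat.dvd_factorial hr.pos le_rfl)
  have hρr : ρ ^ r = 1 := by rw [← pow_orderOf_eq_one ρ, hρ]
  have hρ1 : ρ ≠ 1 := by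
    rintro rfl
    exact hr.one_lt.ne (orderOf_one.symm.trans hρ)
  refine hr.dvd_sum_of_isPeriodicPt (f := (permTup ρ '' ·)) ?_ ?_ ?_ fun C _ => hg ρ C
  · intro C hC
    simp only [Set.Finite.coe_toFinset] at hC ⊢
    exact hinv C hC ρ
  · intro C _
    show (Set.image (permTup ρ))^[r] C = C
    rw [← Set.image_iterate_eq, permTup_iterate, hρr, permTup_one_s8, Set.image_id]
  · intro C hC
    exact hanti C (by simpa using hC) ρ hρ1

end Colors

theorem stmt8_general {V : Type*} [Fintype V] (n r : ℕ) (hn : 2 ≤ n)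
    (hcard : Fintype.card V = n)
    (hr : r.Prime) (hrd : r ∣ n)
    (P : Colors V) :
    ¬ (IsMScheme r P ∧ Homogeneous P ∧ AntisymmetricColl r P) := by
  rintro ⟨hP, hhom, hanti⟩
  subst hcard
  set colors := (Set.toFinite (P r)).toFinset
  have hdvd : ∀ C ∈ colors, Fintype.card V ∣ C.ncard := fun C hC =>
    hP.card_dvd_ncard hhom hr.one_lt.le le_rfl (by simpa [colors] using hC)
  have hsum : ∑ C ∈ colors, C.ncard = (Fintype.card V).descFactorial r := by
    rw [(hP.1 r hr.one_lt.le le_rfl).sum_ncard, card_tup]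
  have horbit : r ∣ ∑ C ∈ colors, C.ncard / Fintype.card V :=
    (hanti r hr.two_le le_rfl).dvd_sum_of_prime hr (hP.invariantAt hr.two_le le_rfl)
      fun σ C => by rw [Set.ncard_image_of_injective C (permTup_injective σ)]
  refine hr.not_mul_dvd_descFactorial hrd (by omega) ?_
  rw [← hsum, ← Nat.mul_div_cancel' (dvd_sum hdvd), Nat.sum_div hdvd]
  exact mul_dvd_mul_left _ horbit

/-- If `r` is the smallest prime divisor of `n = |V| ≥ 2`, there is no
homogeneous antisymmetric `r`-scheme on `V`. -/
theorem stmt8 {V : Type*} [Fintype V] (n r : ℕ) (hn : 2 ≤ n)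
    (hcard : Fintype.card V = n)
    (hr : r.Prime) (hrd : r ∣ n) (hmin : ∀ p, p.Prime → p ∣ n → r ≤ p)
    (P : Colors V) :
    ¬ (IsMScheme r P ∧ Homogeneous P ∧ AntisymmetricColl r P) :=
  stmt8_general n r hn hcard hr hrd P
end

section
/- Let Π = (P_1, …, P_m) be an m-scheme on a finite set V and let P ∈ P_s (1 < s ≤ m) be a matching, with indices 1 ≤ i < j ≤ s such that π_i^s(P) = π_j^s(P) =: Q and |Q| = |P|. Then the restrictions of π_i^s and of π_j^s to P are bijections from P onto Q, and the resulting permutation π_i^s ∘ (π_j^s|_P)^{−1} of Q is not the identity. -/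
instance tupFinite {V : Type*} [Fintype V] (n : ℕ) : Finite (Tup V n) := by
  unfold Tup; infer_instance

/-- For a matching `C` with `π_i(C) = π_j(C) = Q` and `|Q| = |C|`, both
projections restrict to bijections `C → Q`, and they do not agree on `C` (so the induced
permutation of `Q` is not the identity). -/
theorem stmt11 {V : Type*} [Fintype V] (m s : ℕ) (P : Colors V)
    (hscheme : IsMScheme m P) (hs : 1 ≤ s) (hsm : s + 1 ≤ m)
    (C : Set (Tup V (s + 1))) (hC : C ∈ P (s + 1))
    (i j : Fin (s + 1)) (hij : i < j) (Q : Set (Tup V s))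
    (hQi : proj i '' C = Q) (hQj : proj j '' C = Q)
    (hcard : Q.ncard = C.ncard) :
    Set.BijOn (proj i) C Q ∧ Set.BijOn (proj j) C Q ∧
      ¬ Set.EqOn (proj i) (proj j) C := by
  obtain ⟨hcoll, _⟩ := hscheme
  obtain ⟨hne, _⟩ := hcoll (s + 1) (by omega) hsm
  have hCne : C.Nonempty := Set.nonempty_iff_ne_empty.2 (fun h => hne (h ▸ hC))
  have hCfin : C.Finite := Set.toFinite C
  have bij : ∀ k : Fin (s + 1), proj k '' C = Q → Set.BijOn (proj k) C Q := by
    intro k hk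
    refine ⟨fun x hx => hk ▸ Set.mem_image_of_mem _ hx,
      Set.injOn_of_ncard_image_eq (by rw [hk, hcard]) hCfin,
      fun y hy => by rwa [← hk] at hy⟩
  refine ⟨bij i hQi, bij j hQj, fun h => ?_⟩
  obtain ⟨u, hu⟩ := hCne
  have := h hu
  have heq : u.1 ∘ i.succAbove = u.1 ∘ j.succAbove := congrArg Subtype.val this
  have : i.succAbove = j.succAbove := funext fun k => u.2 (congrFun heq k)
  exact absurd (Fin.succAbove_left_injective this) hij.ne
end
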